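/- (Joint-type probability bound for an independent random codeword.) Let X and Y be finite alphabets, let X^n = (X_1,…,X_n) have i.i.d. components distributed according to a distribution P on X, and let Y^n be any Y^n-valued random vector independent of X^n. Then for every joint n-type J on X×Y, P(P̂_{X^n,Y^n} = J) ≤ e^{−n I(J)}, where I(J) is the mutual information of the joint distribution J. -/
import Mathlib


open scoped BigOperators Classical

namespace SyncCode

variable {X Y : Type*}

/-- `P` is a probability distribution on the finite alphabet `X`. -/
def IsDist [Fintype X] (P : X → ℝ) : Prop := (∀ x, 0 ≤ P x) ∧ ∑ x, P x = 1

/-- Block probability `Q^n(y^n|x^n) = ∏ᵢ Q(yᵢ|xᵢ)`. -/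
noncomputable def blockProb (Q : X → Y → ℝ) {n : ℕ} (x : Fin n → X) (y : Fin n → Y) : ℝ :=
  ∏ i, Q (x i) (y i)

/-- Number of occurrences of the letter `a` in `x^n` (so that the empirical type is
this count divided by `n`). -/
noncomputable def count {n : ℕ} (x : Fin n → X) (a : X) : ℕ :=
  (Finset.univ.filter fun i => x i = a).card

/-- Number of joint occurrences of the pair `(a, b)` in `(x^n, y^n)`. -/
noncomputable def count2 {n : ℕ} (x : Fin n → X) (y : Fin n → Y) (a : X) (b : Y) : ℕ :=
  (Finset.univ.filter fun i => x i = a ∧ y i = b).card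

/-- Maximum (over messages) error probability of the block code `(c, φ)` over the
synchronous channel `Q`. -/
noncomputable def maxErr [Fintype Y] (Q : X → Y → ℝ) {n M : ℕ}
    (c : Fin M → Fin n → X) (φ : (Fin n → Y) → Fin M) : ℝ :=
  ⨆ m : Fin M, ∑ y : Fin n → Y, (if φ y = m then 0 else blockProb Q (c m) y)

/-- `ε_n = (n+1)^{|X||Y|} e^{−n q²/(2 ln 2)}`. -/
noncomputable def epsn (X Y : Type*) [Fintype X] [Fintype Y] (q : ℝ) (n : ℕ) : ℝ :=
  ((n : ℝ) + 1) ^ (Fintype.card X * Fintype.card Y) *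
    Real.exp (-((n : ℝ) * q ^ 2) / (2 * Real.log 2))


/-- The mutual information `I(J)` of a joint distribution `J` on `X × Y`
(natural logarithm, with the convention `0 ln(0/·) = 0`). -/
noncomputable def mutInfJoint [Fintype X] [Fintype Y] (J : X → Y → ℝ) : ℝ :=
  ∑ a, ∑ b,
    (if J a b = 0 then 0
     else J a b * Real.log (J a b / ((∑ b', J a b') * (∑ a', J a' b))))

/-- regrouping a product over coordinates into a product over letter pairs -/
lemma prod_comp_eq_prod_pow_count2 [Fintype X] [Fintype Y] {n : ℕ}
    (x : Fin n → X) (y : Fin n → Y) (f : X → Y → ℝ) :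
    ∏ i, f (x i) (y i) = ∏ a, ∏ b, f a b ^ count2 x y a b := by
  classical
  rw [← Finset.prod_fiberwise_of_maps_to (g := fun i => (x i, y i))
    (t := (Finset.univ : Finset (X × Y)))
    (fun i _ => Finset.mem_univ _) (fun i => f (x i) (y i)), Fintype.prod_prod_type]
  refine Finset.prod_congr rfl fun a _ => Finset.prod_congr rfl fun b _ => ?_
  have hfe : (Finset.univ.filter fun i => ((x i, y i) : X × Y) = (a, b))
      = (Finset.univ.filter fun i => x i = a ∧ y i = b) := by
    apply Finset.filter_congr; intro i _; simp [Prod.ext_iff]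
  rw [hfe]
  rw [show (Finset.univ.filter fun i => x i = a ∧ y i = b).prod (fun i => f (x i) (y i))
      = (Finset.univ.filter fun i => x i = a ∧ y i = b).prod (fun _ => f a b) from
    Finset.prod_congr rfl fun i hi => by
      obtain ⟨hx, hy⟩ := (Finset.mem_filter.mp hi).2; rw [hx, hy]]
  rw [Finset.prod_const, count2]

/-- Gibbs-type inequality: a type's own distribution maximizes its probability. -/
lemma gibbs [Fintype X] {n : ℕ} (hn : 0 < n) (m : X → ℕ) (hm : ∑ a, m a = n)
    (q : X → ℝ) (hq0 : ∀ a, 0 ≤ q a) (hq1 : ∑ a, q a = 1) :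
    ∏ a, q a ^ m a ≤ ∏ a, ((m a : ℝ) / n) ^ m a := by
  classical
  by_cases hz : ∃ a, q a = 0 ∧ m a ≠ 0
  · obtain ⟨a, hqa, hma⟩ := hz
    calc ∏ a, q a ^ m a = 0 :=
          Finset.prod_eq_zero (Finset.mem_univ a) (by simp [hqa, zero_pow hma])
      _ ≤ _ := Finset.prod_nonneg fun a _ => pow_nonneg (by positivity) _
  · push_neg at hz
    have hpos : ∀ a, m a ≠ 0 → 0 < q a := fun a h =>
      (hq0 a).lt_of_ne fun e => h (hz a e.symm)
    set F := Finset.univ.filter (fun a : X => m a ≠ 0) with hF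
    have hL : ∏ a, q a ^ m a = ∏ a ∈ F, q a ^ m a := by
      refine (Finset.prod_filter_of_ne fun a _ h => ?_).symm
      intro hm0; exact h (by rw [hm0, pow_zero])
    have hR : ∏ a, ((m a : ℝ) / n) ^ m a = ∏ a ∈ F, ((m a : ℝ) / n) ^ m a := by
      refine (Finset.prod_filter_of_ne fun a _ h => ?_).symm
      intro hm0; exact h (by rw [hm0, pow_zero])
    rw [hL, hR]
    have hnR : (0:ℝ) < n := Nat.cast_pos.mpr hn
    have hLexp : ∏ a ∈ F, q a ^ m a = Real.exp (∑ a ∈ F, (m a : ℝ) * Real.log (q a)) := by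
      rw [Real.exp_sum]
      refine Finset.prod_congr rfl fun a ha => ?_
      have hma : m a ≠ 0 := (Finset.mem_filter.mp ha).2
      rw [Real.exp_nat_mul, Real.exp_log (hpos a hma)]
    have hRexp : ∏ a ∈ F, ((m a : ℝ) / n) ^ m a
        = Real.exp (∑ a ∈ F, (m a : ℝ) * Real.log ((m a : ℝ) / n)) := by
      rw [Real.exp_sum]
      refine Finset.prod_congr rfl fun a ha => ?_
      have hma : m a ≠ 0 := (Finset.mem_filter.mp ha).2
      have : (0:ℝ) < (m a : ℝ) / n := by
        apply div_pos _ hnR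
        exact_mod_cast Nat.pos_of_ne_zero hma
      rw [Real.exp_nat_mul, Real.exp_log this]
    rw [hLexp, hRexp]
    apply Real.exp_le_exp.mpr
    rw [← sub_nonpos, ← Finset.sum_sub_distrib]
    have step1 : ∑ a ∈ F, ((m a : ℝ) * Real.log (q a) - (m a : ℝ) * Real.log ((m a : ℝ) / n))
        ≤ ∑ a ∈ F, ((n : ℝ) * q a - (m a : ℝ)) := by
      refine Finset.sum_le_sum fun a ha => ?_
      have hma : m a ≠ 0 := (Finset.mem_filter.mp ha).2
      have hmaR : (0:ℝ) < (m a : ℝ) := by exact_mod_cast Nat.pos_of_ne_zero hma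
      have hqa : 0 < q a := hpos a hma
      have hlog : Real.log (q a) - Real.log ((m a : ℝ) / n)
          = Real.log (q a * n / (m a : ℝ)) := by
        rw [Real.log_div (by positivity) (ne_of_gt hmaR),
          Real.log_mul (ne_of_gt hqa) (ne_of_gt hnR),
          Real.log_div (ne_of_gt hmaR) (ne_of_gt hnR)]
        ring
      rw [← mul_sub, hlog]
      have hb : Real.log (q a * n / (m a : ℝ)) ≤ q a * n / (m a : ℝ) - 1 :=
        Real.log_le_sub_one_of_pos (by positivity)
      calc (m a : ℝ) * Real.log (q a * n / (m a : ℝ))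
          ≤ (m a : ℝ) * (q a * n / (m a : ℝ) - 1) :=
            mul_le_mul_of_nonneg_left hb (le_of_lt hmaR)
        _ = (n : ℝ) * q a - (m a : ℝ) := by field_simp
    refine step1.trans ?_
    rw [Finset.sum_sub_distrib, ← Finset.mul_sum]
    have h1 : ∑ a ∈ F, q a ≤ 1 := by
      rw [← hq1]
      exact Finset.sum_le_sum_of_subset_of_nonneg (Finset.filter_subset _ _)
        (fun a _ _ => hq0 a)
    have h2 : ∑ a ∈ F, (m a : ℝ) = (n : ℝ) := by
      rw [← Nat.cast_sum]
      norm_cast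
      rw [hF, Finset.sum_filter_ne_zero, hm]
    rw [h2]
    nlinarith [hnR]

/-- the auxiliary "reverse channel" `W(a|b) = J(a,b)/J_Y(b)` -/
noncomputable def Wc [Fintype X] (J : X → Y → ℝ) (a : X) (b : Y) : ℝ :=
  if (∑ a', J a' b) = 0 then 0 else J a b / (∑ a', J a' b)

lemma Wc_nonneg [Fintype X] (J : X → Y → ℝ) (hJ0 : ∀ a b, 0 ≤ J a b) (a : X) (b : Y) :
    0 ≤ Wc J a b := by
  unfold Wc; split
  · exact le_refl 0
  · exact div_nonneg (hJ0 a b) (Finset.sum_nonneg fun a' _ => hJ0 a' b)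

lemma sum_prod_Wc_le_one [Fintype X] [Fintype Y] (J : X → Y → ℝ)
    (hJ0 : ∀ a b, 0 ≤ J a b) {n : ℕ} (y : Fin n → Y) :
    ∑ x : Fin n → X, ∏ i, Wc J (x i) (y i) ≤ 1 := by
  classical
  rw [← Fintype.prod_sum (f := fun i a => Wc J a (y i))]
  refine Finset.prod_le_one (fun i _ => Finset.sum_nonneg fun a _ => Wc_nonneg J hJ0 a (y i))
    (fun i _ => ?_)
  by_cases hb : (∑ a', J a' (y i)) = 0
  · simp [Wc, hb]
  · have : ∑ a, Wc J a (y i) = 1 := by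
      simp only [Wc, if_neg hb]
      rw [← Finset.sum_div, div_self hb]
    rw [this]


/-- **Joint-type probability bound for an independent random codeword**
(inequality (25)). If `X^n` is i.i.d. `P` and `Y^n` is independent of `X^n` with
arbitrary law `g`, then for any joint `n`-type `J`,
`P(P̂_{X^n,Y^n} = J) ≤ e^{−n I(J)}`. -/
theorem joint_type_probability_bound
    {X Y : Type*} [Fintype X] [Fintype Y]
    (n : ℕ) (P : X → ℝ) (hP : IsDist P)
    (g : (Fin n → Y) → ℝ) (hg0 : ∀ y, 0 ≤ g y) (hg1 : ∑ y : Fin n → Y, g y = 1)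
    (J : X → Y → ℝ) (hJ0 : ∀ a b, 0 ≤ J a b) (hJ1 : ∑ a, ∑ b, J a b = 1)
    (hJn : ∀ a b, ∃ k : ℕ, J a b = (k : ℝ) / n) :
    (∑ x : Fin n → X, ∑ y : Fin n → Y,
        (if ∀ a b, (count2 x y a b : ℝ) = n * J a b
          then (∏ i, P (x i)) * g y else 0))
      ≤ Real.exp (-(n : ℝ) * mutInfJoint J) := by
  classical
  rcases Nat.eq_zero_or_pos n with hn0 | hn
  · exfalso
    have hz : ∀ a b, J a b = 0 := by
      intro a b; obtain ⟨k, hk⟩ := hJn a b; rw [hk, hn0]; simp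
    simp only [hz, Finset.sum_const_zero] at hJ1
    exact one_ne_zero hJ1.symm
  choose k hk using hJn
  have hnR : (0:ℝ) < n := Nat.cast_pos.mpr hn
  have hkJ : ∀ a b, (k a b : ℝ) = n * J a b := by
    intro a b; rw [hk a b]; field_simp
  set C : ℝ := ∏ a, ∏ b, (P a * ((∑ a', J a' b) / J a b)) ^ k a b with hC
  have hC0 : 0 ≤ C :=
    Finset.prod_nonneg fun a _ => Finset.prod_nonneg fun b _ =>
      pow_nonneg (mul_nonneg (hP.1 a)
        (div_nonneg (Finset.sum_nonneg fun a' _ => hJ0 a' b) (hJ0 a b))) _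
  -- pointwise bound
  have key : ∀ (x : Fin n → X) (y : Fin n → Y),
      (if ∀ a b, (count2 x y a b : ℝ) = n * J a b then (∏ i, P (x i)) * g y else 0)
      ≤ C * ((∏ i, Wc J (x i) (y i)) * g y) := by
    intro x y
    have hterm : 0 ≤ C * ((∏ i, Wc J (x i) (y i)) * g y) :=
      mul_nonneg hC0 (mul_nonneg
        (Finset.prod_nonneg fun i _ => Wc_nonneg J hJ0 _ _) (hg0 y))
    split_ifs with hcond
    · have hcnt : ∀ a b, count2 x y a b = k a b := by
        intro a b
        have h1 := hcond a b
        rw [← hkJ a b] at h1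
        exact_mod_cast h1
      have hJipos : ∀ i, 0 < J (x i) (y i) := by
        intro i
        have h1 : 0 < count2 x y (x i) (y i) :=
          Finset.card_pos.mpr ⟨i, by simp [count2]⟩
        have h2 := hcond (x i) (y i)
        have h3 : (1:ℝ) ≤ (count2 x y (x i) (y i) : ℝ) := by exact_mod_cast h1
        nlinarith
      have hJYipos : ∀ i, 0 < ∑ a', J a' (y i) := fun i =>
        lt_of_lt_of_le (hJipos i)
          (Finset.single_le_sum (fun a' _ => hJ0 a' (y i)) (Finset.mem_univ (x i)))
      have hsplit : ∏ i, P (x i)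
          = (∏ i, (P (x i) * ((∑ a', J a' (y i)) / J (x i) (y i)))) *
            ∏ i, Wc J (x i) (y i) := by
        rw [← Finset.prod_mul_distrib]
        refine Finset.prod_congr rfl fun i _ => ?_
        rw [Wc, if_neg (ne_of_gt (hJYipos i))]
        field_simp [ne_of_gt (hJipos i), ne_of_gt (hJYipos i)]
      have hCx : ∏ i, (P (x i) * ((∑ a', J a' (y i)) / J (x i) (y i))) = C := by
        rw [prod_comp_eq_prod_pow_count2 x y (fun a b => P a * ((∑ a', J a' b) / J a b)), hC]
        exact Finset.prod_congr rfl fun a _ => Finset.prod_congr rfl fun b _ => by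
          rw [hcnt]
      rw [hsplit, hCx, mul_assoc]
    · exact hterm
  -- sum the pointwise bound
  have hsum : (∑ x : Fin n → X, ∑ y : Fin n → Y,
        (if ∀ a b, (count2 x y a b : ℝ) = n * J a b
          then (∏ i, P (x i)) * g y else 0)) ≤ C := by
    calc (∑ x : Fin n → X, ∑ y : Fin n → Y,
        (if ∀ a b, (count2 x y a b : ℝ) = n * J a b
          then (∏ i, P (x i)) * g y else 0))
        ≤ ∑ x : Fin n → X, ∑ y : Fin n → Y, C * ((∏ i, Wc J (x i) (y i)) * g y) :=
          Finset.sum_le_sum fun x _ => Finset.sum_le_sum fun y _ => key x y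
      _ = ∑ y : Fin n → Y, C * g y * (∑ x : Fin n → X, ∏ i, Wc J (x i) (y i)) := by
          rw [Finset.sum_comm]
          refine Finset.sum_congr rfl fun y _ => ?_
          rw [Finset.mul_sum]
          exact Finset.sum_congr rfl fun x _ => by ring
      _ ≤ ∑ y : Fin n → Y, C * g y * 1 :=
          Finset.sum_le_sum fun y _ => mul_le_mul_of_nonneg_left
            (sum_prod_Wc_le_one J hJ0 y) (mul_nonneg hC0 (hg0 y))
      _ = C := by
          simp only [mul_one]
          rw [← Finset.mul_sum, hg1, mul_one]
  refine hsum.trans ?_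
  -- final bound : C ≤ exp(-n I(J))
  have hCsplit : C = (∏ a, ∏ b, (P a) ^ k a b) *
      (∏ a, ∏ b, ((∑ a', J a' b) / J a b) ^ k a b) := by
    rw [hC, ← Finset.prod_mul_distrib]
    exact Finset.prod_congr rfl fun a _ => by
      rw [← Finset.prod_mul_distrib]
      exact Finset.prod_congr rfl fun b _ => by rw [mul_pow]
  have hD0 : 0 ≤ ∏ a, ∏ b, ((∑ a', J a' b) / J a b) ^ k a b :=
    Finset.prod_nonneg fun a _ => Finset.prod_nonneg fun b _ =>
      pow_nonneg (div_nonneg (Finset.sum_nonneg fun a' _ => hJ0 a' b) (hJ0 a b)) _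
  -- Gibbs step
  have hPk : (∏ a, ∏ b, (P a) ^ k a b) ≤ ∏ a, ∏ b, (∑ b', J a b') ^ k a b := by
    have hpp : ∀ (f : X → ℝ), (∏ a, ∏ b, (f a) ^ k a b) = ∏ a, (f a) ^ (∑ b, k a b) := by
      intro f
      exact Finset.prod_congr rfl fun a _ => Finset.prod_pow_eq_pow_sum _ _ _
    rw [hpp, hpp]
    set m : X → ℕ := fun a => ∑ b, k a b with hmdef
    have hmJX : ∀ a, (m a : ℝ) = n * (∑ b', J a b') := by
      intro a
      rw [hmdef]
      push_cast
      rw [Finset.mul_sum]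
      exact Finset.sum_congr rfl fun b _ => hkJ a b
    have hmn : ∑ a, m a = n := by
      have : ((∑ a, m a : ℕ) : ℝ) = (n : ℝ) := by
        push_cast
        rw [show (∑ a, (m a : ℝ)) = ∑ a, (n : ℝ) * (∑ b', J a b') from
          Finset.sum_congr rfl fun a _ => hmJX a, ← Finset.mul_sum, hJ1, mul_one]
      exact_mod_cast this
    calc ∏ a, (P a) ^ m a ≤ ∏ a, ((m a : ℝ) / n) ^ m a := gibbs hn m hmn P hP.1 hP.2
      _ = ∏ a, (∑ b', J a b') ^ m a := by
        refine Finset.prod_congr rfl fun a _ => ?_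
        rw [hmJX a, mul_comm ((n:ℝ)) _, mul_div_assoc, div_self (ne_of_gt hnR), mul_one]
  -- identification of the exponential
  have hE : (∏ a, ∏ b, (∑ b', J a b') ^ k a b) *
      (∏ a, ∏ b, ((∑ a', J a' b) / J a b) ^ k a b)
      = Real.exp (-(n : ℝ) * mutInfJoint J) := by
    rw [mutInfJoint, Finset.mul_sum, Real.exp_sum, ← Finset.prod_mul_distrib]
    refine Finset.prod_congr rfl fun a _ => ?_
    rw [Finset.mul_sum, Real.exp_sum, ← Finset.prod_mul_distrib]
    refine Finset.prod_congr rfl fun b _ => ?_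
    by_cases hJab : J a b = 0
    · have hk0 : k a b = 0 := by
        have := hkJ a b
        rw [hJab, mul_zero] at this
        exact_mod_cast this
      simp [hJab, hk0]
    · have hJpos : 0 < J a b := lt_of_le_of_ne (hJ0 a b) (Ne.symm hJab)
      have hJXpos : 0 < ∑ b', J a b' :=
        lt_of_lt_of_le hJpos (Finset.single_le_sum (fun b' _ => hJ0 a b') (Finset.mem_univ b))
      have hJYpos : 0 < ∑ a', J a' b :=
        lt_of_lt_of_le hJpos (Finset.single_le_sum (fun a' _ => hJ0 a' b) (Finset.mem_univ a))
      rw [if_neg hJab]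
      have hexp : -(n : ℝ) * (J a b * Real.log (J a b / ((∑ b', J a b') * (∑ a', J a' b))))
          = (k a b : ℝ) * Real.log ((∑ b', J a b') * ((∑ a', J a' b) / J a b)) := by
        rw [Real.log_div (ne_of_gt hJpos) (ne_of_gt (mul_pos hJXpos hJYpos)),
          ← mul_div_assoc,
          Real.log_div (ne_of_gt (mul_pos hJXpos hJYpos)) (ne_of_gt hJpos), hkJ a b]
        ring
      rw [hexp, Real.exp_nat_mul, Real.exp_log
        (mul_pos hJXpos (div_pos hJYpos hJpos)), mul_pow]
  calc C ≤ (∏ a, ∏ b, (∑ b', J a b') ^ k a b) *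
      (∏ a, ∏ b, ((∑ a', J a' b) / J a b) ^ k a b) := by
        rw [hCsplit]; exact mul_le_mul_of_nonneg_right hPk hD0
    _ = _ := hE


end SyncCode
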